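/- arXiv:2209.12057 — 2 statements merged into one kernel-verified Lean document; each statement's English description precedes it below -/
import Mathlib

section
/- With the dense initialization B̃₀ = ζ P_∥ P_∥ᵀ + ζᶜ P_⊥ P_⊥ᵀ satisfying B̃₀ S = ζ S, the MSS compact formulation B = B̃₀ + Ψ M Ψᵀ with Ψ = [S, Y − B̃₀S] and M = [[W(SᵀB̃₀S − (T+E+Tᵀ))W, W],[W, 0]] is equal to B = B̃₀ + Ψ̃ M̃ Ψ̃ᵀ with Ψ̃ = [S, Y] and M̃ = [[−ζW − W(T+E+Tᵀ)W, W],[W, 0]], where W = (SᵀS)⁻¹. -/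
/-!
Since `B̃₀ S = ζ S`, the second block column of `Ψ` is `Y - ζ S`, and `W Sᵀ B̃₀ S W = ζ W`.
Expanding the quadratic form `Ψ M Ψᵀ` block by block, the two cross terms `S W (Y - ζ S)ᵀ` and
`(Y - ζ S) W Sᵀ` each contribute `-ζ S W Sᵀ`, which moves `ζ W` in the top-left block to `-ζ W`.
-/

open Matrix

namespace Matrix

variable {m k₁ k₂ R : Type*} [Fintype k₁] [Fintype k₂] [CommRing R]

theorem fromCols_mul_fromBlocks_zero_mul_transpose (A : Matrix m k₁ R) (B : Matrix m k₂ R)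
    (P : Matrix k₁ k₁ R) (Q : Matrix k₁ k₂ R) (Q' : Matrix k₂ k₁ R) :
    fromCols A B * fromBlocks P Q Q' 0 * (fromCols A B)ᵀ
      = A * P * Aᵀ + A * Q * Bᵀ + B * Q' * Aᵀ := by
  rw [transpose_fromCols, fromCols_mul_fromBlocks, fromCols_mul_fromRows]
  simp only [Matrix.mul_zero, add_zero, Matrix.add_mul]
  abel

theorem fromCols_sub_smul_mul_fromBlocks_mul_transpose (S Y : Matrix m k₁ R)
    (P W : Matrix k₁ k₁ R) (c : R) :
    fromCols S (Y - c • S) * fromBlocks (P + c • W) W W 0 * (fromCols S (Y - c • S))ᵀ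
      = fromCols S Y * fromBlocks (P - c • W) W W 0 * (fromCols S Y)ᵀ := by
  rw [fromCols_mul_fromBlocks_zero_mul_transpose, fromCols_mul_fromBlocks_zero_mul_transpose]
  simp only [transpose_sub, transpose_smul, Matrix.mul_sub, Matrix.sub_mul, Matrix.mul_add,
    Matrix.add_mul, Matrix.mul_smul, Matrix.smul_mul, Matrix.mul_assoc]
  abel

variable {n : Type*} [Fintype n] [DecidableEq k₁]

theorem mul_transpose_mul_sub_mul_of_mul_eq_smul {S : Matrix n k₁ R} {B : Matrix n n R}
    {W : Matrix k₁ k₁ R} {c : R} (hB : B * S = c • S) (hW : W * (Sᵀ * S) = 1)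
    (Θ : Matrix k₁ k₁ R) :
    W * (Sᵀ * B * S - Θ) * W = c • W - W * Θ * W := by
  rw [Matrix.mul_assoc Sᵀ, hB, Matrix.mul_smul, Matrix.mul_sub, Matrix.sub_mul,
    Matrix.mul_smul, hW, Matrix.smul_mul, Matrix.one_mul]

end Matrix

theorem second_compact_formulation_general {n l : ℕ}
    (S Y : Matrix (Fin n) (Fin l) ℝ) (B0 : Matrix (Fin n) (Fin n) ℝ) (ζ : ℝ)
    (hB0S : B0 * S = ζ • S)
    (hS : IsUnit (Sᵀ * S))
    (W : Matrix (Fin l) (Fin l) ℝ) (hW : W = (Sᵀ * S)⁻¹)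
    (T E : Matrix (Fin l) (Fin l) ℝ)
    (Ψ : Matrix (Fin n) (Fin l ⊕ Fin l) ℝ)
    (hΨ : Ψ = Matrix.fromCols S (Y - B0 * S))
    (M : Matrix (Fin l ⊕ Fin l) (Fin l ⊕ Fin l) ℝ)
    (hM : M = Matrix.fromBlocks (W * (Sᵀ * B0 * S - (T + E + Tᵀ)) * W) W W 0)
    (Ψt : Matrix (Fin n) (Fin l ⊕ Fin l) ℝ)
    (hΨt : Ψt = Matrix.fromCols S Y)
    (Mt : Matrix (Fin l ⊕ Fin l) (Fin l ⊕ Fin l) ℝ)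
    (hMt : Mt = Matrix.fromBlocks (-(ζ • W) - W * (T + E + Tᵀ) * W) W W 0) :
    B0 + Ψ * M * Ψᵀ = B0 + Ψt * Mt * Ψtᵀ := by
  have hWS : W * (Sᵀ * S) = 1 := hW ▸ nonsing_inv_mul _ ((isUnit_iff_isUnit_det _).mp hS)
  set WΘW := W * (T + E + Tᵀ) * W
  have hM' : M = fromBlocks (-WΘW + ζ • W) W W 0 := by
    rw [hM, mul_transpose_mul_sub_mul_of_mul_eq_smul hB0S hWS, neg_add_eq_sub]
  have hMt' : Mt = fromBlocks (-WΘW - ζ • W) W W 0 := by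
    rw [hMt, sub_eq_add_neg, sub_eq_add_neg, add_comm]
  rw [hΨ, hB0S, hM', hΨt, hMt', fromCols_sub_smul_mul_fromBlocks_mul_transpose]

/-- Equality of the two compact formulations of the MSS matrix under the dense
initialization `B̃₀` satisfying `B̃₀ S = ζ S`. -/
theorem second_compact_formulation {n l : ℕ}
    (S Y : Matrix (Fin n) (Fin l) ℝ) (B0 : Matrix (Fin n) (Fin n) ℝ) (ζ : ℝ)
    (hB0sym : B0ᵀ = B0) (hB0S : B0 * S = ζ • S)
    (hS : IsUnit (Sᵀ * S))
    (W : Matrix (Fin l) (Fin l) ℝ) (hW : W = (Sᵀ * S)⁻¹)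
    (T E : Matrix (Fin l) (Fin l) ℝ)
    (hT : T = fun i j => if i < j then (Sᵀ * Y) i j else 0)
    (hE : E = Matrix.diagonal (fun i => (Sᵀ * Y) i i))
    (Ψ : Matrix (Fin n) (Fin l ⊕ Fin l) ℝ)
    (hΨ : Ψ = Matrix.fromCols S (Y - B0 * S))
    (M : Matrix (Fin l ⊕ Fin l) (Fin l ⊕ Fin l) ℝ)
    (hM : M = Matrix.fromBlocks (W * (Sᵀ * B0 * S - (T + E + Tᵀ)) * W) W W 0)
    (Ψt : Matrix (Fin n) (Fin l ⊕ Fin l) ℝ)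
    (hΨt : Ψt = Matrix.fromCols S Y)
    (Mt : Matrix (Fin l ⊕ Fin l) (Fin l ⊕ Fin l) ℝ)
    (hMt : Mt = Matrix.fromBlocks (-(ζ • W) - W * (T + E + Tᵀ) * W) W W 0) :
    B0 + Ψ * M * Ψᵀ = B0 + Ψt * Mt * Ψtᵀ :=
  second_compact_formulation_general S Y B0 ζ hB0S hS W hW T E Ψ hΨ M hM Ψt hΨt Mt hMt
end

section
/- (Moré–Sorensen optimality conditions, sufficiency) If s* ∈ ℝⁿ satisfies ‖s*‖₂ ≤ δ and there exists σ* ≥ 0 such that B + σ*I is positive semidefinite, (B + σ*I)s* = −g, and σ*(δ − ‖s*‖₂) = 0, then s* is a global minimizer of Q(s) = gᵀs + ½ sᵀBs over the ball ‖s‖₂ ≤ δ. -/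
/-!
Put `M = B + σ I` and use `g = -M s*`. Completing the square gives
`Q s - Q s* = ½ (s - s*)ᵀ M (s - s*) + ½ σ (‖s*‖² - ‖s‖²)`.
The first term is nonnegative because `M` is positive semidefinite, and the second because
complementarity forces `‖s*‖ = δ ≥ ‖s‖` whenever `σ > 0`.
-/

open Matrix

noncomputable def norm2 {m : ℕ} (x : Fin m → ℝ) : ℝ := Real.sqrt (∑ i, x i ^ 2)

lemma norm2_nonneg {m : ℕ} (x : Fin m → ℝ) : 0 ≤ norm2 x := Real.sqrt_nonneg _

lemma norm2_sq {m : ℕ} (x : Fin m → ℝ) : norm2 x ^ 2 = x ⬝ᵥ x := by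
  rw [norm2, Real.sq_sqrt (Finset.sum_nonneg fun i _ => sq_nonneg (x i))]
  simp only [dotProduct, sq]

lemma dotProduct_self_le_sq_of_norm2_le {m : ℕ} {x : Fin m → ℝ} {δ : ℝ} (hx : norm2 x ≤ δ) :
    x ⬝ᵥ x ≤ δ ^ 2 :=
  norm2_sq x ▸ pow_le_pow_left₀ (norm2_nonneg x) hx 2

lemma mul_dotProduct_self_sub_nonneg_of_complementary {m : ℕ} {x y : Fin m → ℝ} {σ δ : ℝ}
    (hσ : 0 ≤ σ) (hcomp : σ * (δ - norm2 x) = 0) (hy : norm2 y ≤ δ) :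
    0 ≤ σ * (x ⬝ᵥ x - y ⬝ᵥ y) := by
  rcases mul_eq_zero.1 hcomp with rfl | hx
  · rw [zero_mul]
  · have hxx : x ⬝ᵥ x = δ ^ 2 := by rw [← norm2_sq, sub_eq_zero.1 hx]
    exact mul_nonneg hσ (sub_nonneg.2 (hxx ▸ dotProduct_self_le_sq_of_norm2_le hy))

theorem Matrix.IsSymm.sub_dotProduct_mulVec_sub {ι R : Type*} [Fintype ι] [CommRing R]
    {M : Matrix ι ι R} (hM : M.IsSymm) (x y : ι → R) :
    (x - y) ⬝ᵥ M *ᵥ (x - y) = x ⬝ᵥ M *ᵥ x - 2 * (x ⬝ᵥ M *ᵥ y) + y ⬝ᵥ M *ᵥ y := by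
  have hswap : y ⬝ᵥ M *ᵥ x = x ⬝ᵥ M *ᵥ y := by
    rw [← dotProduct_transpose_mulVec, hM.eq]
  simp only [mulVec_sub, sub_dotProduct, dotProduct_sub, hswap]
  ring

section QuadraticModel

variable {ι R : Type*} [Fintype ι] [Field R]

def quadraticModel (g : ι → R) (B : Matrix ι ι R) (s : ι → R) : R :=
  g ⬝ᵥ s + 1 / 2 * (s ⬝ᵥ B *ᵥ s)

theorem quadraticModel_sub_eq [DecidableEq ι] [CharZero R] {B : Matrix ι ι R} {σ : R}
    (hM : (B + σ • 1).IsSymm) {g x : ι → R} (hx : (B + σ • 1) *ᵥ x = -g) (y : ι → R) :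
    quadraticModel g B y - quadraticModel g B x =
      1 / 2 * ((y - x) ⬝ᵥ (B + σ • 1) *ᵥ (y - x)) + 1 / 2 * (σ * (x ⬝ᵥ x - y ⬝ᵥ y)) := by
  have hg : g = -((B + σ • 1) *ᵥ x) := by rw [hx, neg_neg]
  have hshift (z : ι → R) : z ⬝ᵥ (B + σ • 1) *ᵥ z = z ⬝ᵥ B *ᵥ z + σ * (z ⬝ᵥ z) := by
    rw [add_mulVec, smul_mulVec, one_mulVec, dotProduct_add, dotProduct_smul, smul_eq_mul]
  have hgz (z : ι → R) : g ⬝ᵥ z = -(z ⬝ᵥ (B + σ • 1) *ᵥ x) := by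
    rw [hg, neg_dotProduct, dotProduct_comm]
  rw [quadraticModel, quadraticModel, hM.sub_dotProduct_mulVec_sub, hgz, hgz, hshift, hshift]
  ring

end QuadraticModel

theorem more_sorensen_sufficiency_general {n : ℕ}
    (B : Matrix (Fin n) (Fin n) ℝ)
    (g : Fin n → ℝ) (δ : ℝ)
    (Q : (Fin n → ℝ) → ℝ)
    (hQ : Q = fun s => g ⬝ᵥ s + (1 / 2) * (s ⬝ᵥ B.mulVec s))
    (sstar : Fin n → ℝ)
    (σ : ℝ) (hσ : 0 ≤ σ)
    (hpsd : (B + σ • (1 : Matrix (Fin n) (Fin n) ℝ)).PosSemidef)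
    (heq : (B + σ • (1 : Matrix (Fin n) (Fin n) ℝ)).mulVec sstar = -g)
    (hcomp : σ * (δ - norm2 sstar) = 0) :
    ∀ s : Fin n → ℝ, norm2 s ≤ δ → Q sstar ≤ Q s := by
  intro s hs
  subst hQ
  have hsq := hpsd.dotProduct_mulVec_nonneg (s - sstar)
  rw [star_trivial] at hsq
  have hσterm := mul_dotProduct_self_sub_nonneg_of_complementary hσ hcomp hs
  have hdiff := quadraticModel_sub_eq (isHermitian_iff_isSymm.1 hpsd.isHermitian) heq s
  unfold quadraticModel at hdiff
  linarith

/-- Moré–Sorensen optimality conditions: sufficiency. -/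
theorem more_sorensen_sufficiency {n : ℕ}
    (B : Matrix (Fin n) (Fin n) ℝ) (hB : Bᵀ = B)
    (g : Fin n → ℝ) (δ : ℝ) (hδ : 0 < δ)
    (Q : (Fin n → ℝ) → ℝ)
    (hQ : Q = fun s => g ⬝ᵥ s + (1 / 2) * (s ⬝ᵥ B.mulVec s))
    (sstar : Fin n → ℝ) (hfeas : norm2 sstar ≤ δ)
    (σ : ℝ) (hσ : 0 ≤ σ)
    (hpsd : (B + σ • (1 : Matrix (Fin n) (Fin n) ℝ)).PosSemidef)
    (heq : (B + σ • (1 : Matrix (Fin n) (Fin n) ℝ)).mulVec sstar = -g)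
    (hcomp : σ * (δ - norm2 sstar) = 0) :
    ∀ s : Fin n → ℝ, norm2 s ≤ δ → Q sstar ≤ Q s :=
  more_sorensen_sufficiency_general B g δ Q hQ sstar σ hσ hpsd heq hcomp
end
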